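/- Let p be a prime and let X be a Noetherian scheme over F_p (i.e., every ring of sections O_X(U) has characteristic p or is the zero ring). Then X is semi F-regular — meaning O_X(U) is semi F-regular for every affine open U of X — if and only if there exists a cover of X by affine open subsets {U_α}_{α∈A} such that O_X(U_α) is semi F-regular for every α ∈ A. -/

import Mathlib

/-- `offMinimal S` is `S°`, the set of elements of `S` lying outside every minimal prime. -/
def offMinimal (S : Type*) [CommRing S] : Set S :=
  {c : S | ∀ P ∈ minimalPrimes S, c ∉ P}

/-- The bracket power `J^[q]`, generated by `q`-th powers of elements of `J`. -/
def bracketPow {S : Type*} [CommRing S] (J : Ideal S) (q : ℕ) : Ideal S :=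
  Ideal.span ((fun a => a ^ q) '' (J : Set S))

/-- The tight closure `J^*` of an ideal `J` in a ring of characteristic `p`. -/
def tightClosure (p : ℕ) {S : Type*} [CommRing S] (J : Ideal S) : Set S :=
  {z : S | ∃ c ∈ offMinimal S, ∃ e₀ : ℕ, ∀ e : ℕ, e₀ ≤ e →
    c * z ^ p ^ e ∈ bracketPow J (p ^ e)}

/-- A ring `S` is weakly F-regular (with respect to `p`) if every ideal is tightly closed. -/
def WeaklyFRegular (p : ℕ) (S : Type*) [CommRing S] : Prop :=
  ∀ J : Ideal S, tightClosure p J = (J : Set S)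

/-- A ring `S` is semi F-regular (with respect to `p`) if for every `f ∈ S` the localization
`S_f` is weakly F-regular. -/
def SemiFRegular (p : ℕ) (S : Type*) [CommRing S] : Prop :=
  ∀ f : S, WeaklyFRegular p (Localization.Away f)

/-!
Semi F-regularity of rings satisfies the two hypotheses of the affine communication lemma
`AlgebraicGeometry.of_affine_open_cover`. It passes from `R` to `R_g`, since a localization of
`R_g` at one element is a localization of `R` at one element. It descends from the `R_{f_i}`
when the `f_i` generate the unit ideal: minimal primes of `R_{f_i}` contract to minimal primes
of `R`, so `R°` maps into `R_{f_i}°`, and for `z ∈ J^*` the image of `z` in `R_{f_i}` lies in `(J R_{f_i})^* = J R_{f_i}`, whence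
`f_i^n z ∈ J` for every `i` and `z ∈ J`.
-/

section Ring

variable {p : ℕ} {R S : Type*} [CommRing R] [CommRing S]

lemma one_mem_offMinimal : (1 : R) ∈ offMinimal R :=
  fun _ hP h => hP.1.1.ne_top ((Ideal.eq_top_iff_one _).mpr h)

lemma map_mem_offMinimal {φ : R →+* S}
    (hφ : ∀ P ∈ minimalPrimes S, P.comap φ ∈ minimalPrimes R) {c : R} (hc : c ∈ offMinimal R) :
    φ c ∈ offMinimal S :=
  fun P hP h => hc _ (hφ P hP) h

lemma RingEquiv.comap_mem_minimalPrimes (e : R ≃+* S) {P : Ideal S} (hP : P ∈ minimalPrimes S) :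
    P.comap (e : R →+* S) ∈ minimalPrimes R := by
  have := Ideal.minimalPrimes_comap_of_surjective (f := (e : R →+* S)) e.surjective hP
  rwa [Ideal.comap_bot_of_injective (e : R →+* S) e.injective] at this

lemma IsLocalization.comap_mem_minimalPrimes (M : Submonoid R) [Algebra R S] [IsLocalization M S]
    {P : Ideal S} (hP : P ∈ minimalPrimes S) : P.comap (algebraMap R S) ∈ minimalPrimes R := by
  have : P ∈ (Ideal.map (algebraMap R S) ⊥).minimalPrimes := by rwa [Ideal.map_bot]
  rwa [IsLocalization.minimalPrimes_map M] at this

lemma subset_tightClosure (J : Ideal R) : (J : Set R) ⊆ tightClosure p J :=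
  fun z hz => ⟨1, one_mem_offMinimal, 0, fun _ _ => by
    rw [one_mul]
    exact Ideal.subset_span ⟨z, hz, rfl⟩⟩

lemma map_bracketPow_le (φ : R →+* S) (J : Ideal R) (q : ℕ) :
    (bracketPow J q).map φ ≤ bracketPow (J.map φ) q := by
  rw [bracketPow, Ideal.map_span, Ideal.span_le]
  rintro _ ⟨_, ⟨a, ha, rfl⟩, rfl⟩
  rw [map_pow]
  exact Ideal.subset_span ⟨φ a, Ideal.mem_map_of_mem φ ha, rfl⟩

lemma map_mem_tightClosure_map {φ : R →+* S}
    (hφ : ∀ P ∈ minimalPrimes S, P.comap φ ∈ minimalPrimes R) {J : Ideal R} {z : R}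
    (hz : z ∈ tightClosure p J) : φ z ∈ tightClosure p (J.map φ) := by
  obtain ⟨c, hc, e₀, h⟩ := hz
  refine ⟨φ c, map_mem_offMinimal hφ hc, e₀, fun e he => ?_⟩
  rw [← map_pow, ← map_mul]
  exact map_bracketPow_le φ J _ (Ideal.mem_map_of_mem φ (h e he))

lemma tightClosure_subset_comap_map {φ : R →+* S}
    (hφ : ∀ P ∈ minimalPrimes S, P.comap φ ∈ minimalPrimes R) (hS : WeaklyFRegular p S)
    (J : Ideal R) : tightClosure p J ⊆ (J.map φ).comap φ := fun _ hz => by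
  have := map_mem_tightClosure_map hφ hz
  rwa [hS] at this

lemma WeaklyFRegular.of_ringEquiv (e : R ≃+* S) (h : WeaklyFRegular p R) :
    WeaklyFRegular p S := fun J => by
  refine (subset_tightClosure J).antisymm' ?_
  have := tightClosure_subset_comap_map (φ := (e.symm : S →+* R))
    (fun _ => e.symm.comap_mem_minimalPrimes) h J
  rwa [Ideal.comap_map_of_bijective (e.symm : S →+* R) e.symm.bijective] at this

end Ring

section Localization

variable {p : ℕ} {R : Type*} [CommRing R]

lemma WeaklyFRegular.of_span_eq_top {ι : Type*} (f : ι → R) (hf : Ideal.span (Set.range f) = ⊤)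
    (h : ∀ i, WeaklyFRegular p (Localization.Away (f i))) : WeaklyFRegular p R := by
  intro J
  refine (subset_tightClosure J).antisymm' fun z hz => ?_
  refine Submodule.mem_of_span_eq_top_of_smul_pow_mem J _ hf z ?_
  rintro ⟨_, i, rfl⟩
  have hz' : algebraMap R (Localization.Away (f i)) z ∈ J.map (algebraMap R _) :=
    tightClosure_subset_comap_map
      (fun _ => IsLocalization.comap_mem_minimalPrimes (.powers (f i))) (h i) J hz
  obtain ⟨_, ⟨n, rfl⟩, hn⟩ :=
    (IsLocalization.algebraMap_mem_map_algebraMap_iff (.powers (f i)) _ J z).1 hz'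
  exact ⟨n, hn⟩

variable {S : Type*} [CommRing S] [Algebra R S]

lemma SemiFRegular.of_isLocalization_away (g : R) [IsLocalization.Away g S]
    (h : SemiFRegular p R) : SemiFRegular p S := by
  intro s
  obtain ⟨n, a, ha⟩ := IsLocalization.Away.surj g s
  have hs : Associated (algebraMap R S a) s :=
    Associated.symm ⟨(IsLocalization.Away.algebraMap_pow_isUnit g n).unit, ha⟩
  have := IsLocalization.Away.mul_of_associated g a s (T := Localization.Away s) hs
  exact (h (g * a)).of_ringEquiv
    (IsLocalization.algEquiv (.powers (g * a)) _ (Localization.Away s)).toRingEquiv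

lemma SemiFRegular.of_span_eq_top {ι : Type*} (f : ι → R) (hf : Ideal.span (Set.range f) = ⊤)
    (S : ι → Type*) [∀ i, CommRing (S i)] [∀ i, Algebra R (S i)]
    [∀ i, IsLocalization.Away (f i) (S i)] (h : ∀ i, SemiFRegular p (S i)) :
    SemiFRegular p R := by
  intro g
  refine WeaklyFRegular.of_span_eq_top (fun i => algebraMap R (Localization.Away g) (f i)) ?_
    fun i => ?_
  · rw [Set.range_comp', ← Ideal.map_span, hf, Ideal.map_top]
  · have := IsLocalization.Away.mul' (S i) (Localization.Away (algebraMap R (S i) g)) (f i) g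
    have := IsLocalization.Away.mul (Localization.Away g)
      (Localization.Away (algebraMap R (Localization.Away g) (f i))) g (f i)
    exact (h i (algebraMap R (S i) g)).of_ringEquiv
      (IsLocalization.algEquiv (.powers (f i * g)) _ _).toRingEquiv

end Localization

namespace AlgebraicGeometry.IsAffineOpen

variable {p : ℕ} {X : Scheme} {U : X.Opens}

lemma semiFRegular_basicOpen (hU : IsAffineOpen U) (f : Γ(X, U)) (h : SemiFRegular p Γ(X, U)) :
    SemiFRegular p Γ(X, X.basicOpen f) :=
  have := hU.isLocalization_basicOpen f
  h.of_isLocalization_away f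

lemma semiFRegular_of_span_eq_top (hU : IsAffineOpen U) (s : Set Γ(X, U))
    (hs : Ideal.span s = ⊤) (h : ∀ f : s, SemiFRegular p Γ(X, X.basicOpen f.1)) :
    SemiFRegular p Γ(X, U) :=
  have := fun f : s => hU.isLocalization_basicOpen f.1
  SemiFRegular.of_span_eq_top (fun f : s => f.1) (by rwa [Subtype.range_coe]) _ h

end AlgebraicGeometry.IsAffineOpen

open AlgebraicGeometry

theorem scheme_semiFRegular_iff_exists_affine_cover_general (p : ℕ)
    (X : Scheme.{u}) :
    (∀ U : X.Opens, IsAffineOpen U → SemiFRegular p Γ(X, U)) ↔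
    (∃ (ι : Type u) (U : ι → X.Opens), (∀ α, IsAffineOpen (U α)) ∧ (⨆ α, U α) = ⊤ ∧
      ∀ α, SemiFRegular p Γ(X, U α)) := by
  refine ⟨fun h => ⟨X.affineOpens, fun U => U.1, fun U => U.2, iSup_affineOpens_eq_top X,
    fun U => h U.1 U.2⟩, ?_⟩
  rintro ⟨ι, U, hU, hcover, hsf⟩ V hV
  exact of_affine_open_cover (P := fun W => SemiFRegular p Γ(X, W)) (fun α => ⟨U α, hU α⟩)
    hcover ⟨V, hV⟩ (fun W f => W.2.semiFRegular_basicOpen f)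
    (fun W s hs => W.2.semiFRegular_of_span_eq_top _ hs) hsf

/-- a Noetherian scheme over `𝔽_p` (every ring of sections has characteristic
`p` or is the zero ring) is semi F-regular (every ring of sections over an affine open is
semi F-regular) iff it has a cover by affine opens with semi F-regular rings of sections. -/
theorem scheme_semiFRegular_iff_exists_affine_cover (p : ℕ) (hp : p.Prime)
    (X : Scheme.{u}) [AlgebraicGeometry.IsNoetherian X]
    (hchar : ∀ U : X.Opens, CharP Γ(X, U) p ∨ Subsingleton Γ(X, U)) :
    (∀ U : X.Opens, IsAffineOpen U → SemiFRegular p Γ(X, U)) ↔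
    (∃ (ι : Type u) (U : ι → X.Opens), (∀ α, IsAffineOpen (U α)) ∧ (⨆ α, U α) = ⊤ ∧
      ∀ α, SemiFRegular p Γ(X, U α)) :=
  scheme_semiFRegular_iff_exists_affine_cover_general p X
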